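/- arXiv:1012.3056 — 4 statements merged into one kernel-verified Lean document; each statement's English description precedes it below -/
import Mathlib

section
/- Let η and η̃ be random variables taking values in the natural numbers {0,1,2,...}, each with finite second moment, and suppose they have equal finite positive means E[η] = E[η̃] > 0. If η is smaller than η̃ in the length-biased probability generating function ordering, i.e. for every s ∈ [0,1] one has E[1{η ≥ 1}·η·s^{η−1}] ≥ E[1{η̃ ≥ 1}·η̃·s^{η̃−1}], then Var[η] ≤ Var[η̃]. -/
/-!
Write `g(s) = E[η s^(η-1)]`, so that `g(1) = E[η]`. Since `(n - n s^(n-1)) / (1 - s)` increases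
to `n (n - 1)` as `s ↑ 1`, dominated convergence gives `(g(1) - g(s)) / (1 - s) → E[η (η - 1)]`.
Equal means and `g̃ ≤ g` on `[0, 1]` therefore yield `E[η (η - 1)] ≤ E[η̃ (η̃ - 1)]`, and
`Var[η] = E[η (η - 1)] + E[η] - E[η]²`.
-/

open MeasureTheory ProbabilityTheory Filter Topology

/-- The slope of `s ↦ n s^(n-1)` between `s` and `1`, written without division. -/
def powDerivSlope (n : ℕ) (s : ℝ) : ℝ := n * ∑ i ∈ Finset.range (n - 1), s ^ i

lemma one_sub_mul_powDerivSlope (n : ℕ) (s : ℝ) :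
    (1 - s) * powDerivSlope n s = n - n * s ^ (n - 1) := by
  rw [powDerivSlope, mul_left_comm, mul_neg_geom_sum]
  ring

lemma powDerivSlope_one (n : ℕ) : powDerivSlope n 1 = n * ((n : ℝ) - 1) := by
  cases n <;> simp [powDerivSlope]

lemma continuous_powDerivSlope (n : ℕ) : Continuous (powDerivSlope n) := by
  unfold powDerivSlope
  fun_prop

lemma abs_powDerivSlope_le_sq (n : ℕ) {s : ℝ} (h0 : 0 ≤ s) (h1 : s ≤ 1) :
    |powDerivSlope n s| ≤ (n : ℝ) ^ 2 := by
  have hsum : ∑ i ∈ Finset.range (n - 1), s ^ i ≤ n := by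
    calc ∑ i ∈ Finset.range (n - 1), s ^ i ≤ ∑ _i ∈ Finset.range (n - 1), (1 : ℝ) :=
          Finset.sum_le_sum fun i _ => pow_le_one₀ h0 h1
      _ ≤ n := by simp
  rw [abs_of_nonneg (by unfold powDerivSlope; positivity), sq]
  exact mul_le_mul_of_nonneg_left hsum n.cast_nonneg

section NatValued

variable {Ω : Type*} [MeasurableSpace Ω] {μ : Measure Ω} {X : Ω → ℕ}

lemma aestronglyMeasurable_comp_of_natCast (hX : AEMeasurable (fun ω => (X ω : ℝ)) μ)
    (f : ℕ → ℝ) : AEStronglyMeasurable (fun ω => f (X ω)) μ := by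
  have hfloor : (fun ω => f (X ω)) = (f ∘ Nat.floor) ∘ fun ω => (X ω : ℝ) := by
    ext ω
    simp
  rw [hfloor]
  exact ((Measurable.of_discrete.comp Nat.measurable_floor).comp_aemeasurable hX)
    |>.aestronglyMeasurable

lemma integrable_comp_of_abs_le_sq (hX : MemLp (fun ω => (X ω : ℝ)) 2 μ) {f : ℕ → ℝ}
    (hf : ∀ n, |f n| ≤ (n : ℝ) ^ 2) : Integrable (fun ω => f (X ω)) μ :=
  hX.integrable_sq.mono
    (aestronglyMeasurable_comp_of_natCast hX.aestronglyMeasurable.aemeasurable f)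
    (ae_of_all _ fun ω => by simpa [abs_of_nonneg (sq_nonneg (X ω : ℝ))] using hf (X ω))

lemma integrable_natCast (hX : MemLp (fun ω => (X ω : ℝ)) 2 μ) :
    Integrable (fun ω => (X ω : ℝ)) μ :=
  integrable_comp_of_abs_le_sq (f := fun n => (n : ℝ)) hX fun n => by
    rw [Nat.abs_cast]
    exact_mod_cast Nat.le_self_pow two_ne_zero n

lemma integrable_natCast_mul_pow (hX : MemLp (fun ω => (X ω : ℝ)) 2 μ) {s : ℝ} (h0 : 0 ≤ s)
    (h1 : s ≤ 1) : Integrable (fun ω => (X ω : ℝ) * s ^ (X ω - 1)) μ := by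
  refine integrable_comp_of_abs_le_sq (f := fun n => (n : ℝ) * s ^ (n - 1)) hX fun n => ?_
  have hn : (n : ℝ) ≤ (n : ℝ) ^ 2 := by exact_mod_cast Nat.le_self_pow two_ne_zero n
  rw [abs_of_nonneg (by positivity)]
  calc (n : ℝ) * s ^ (n - 1) ≤ n * 1 :=
        mul_le_mul_of_nonneg_left (pow_le_one₀ h0 h1) n.cast_nonneg
    _ = n := mul_one _
    _ ≤ (n : ℝ) ^ 2 := hn

lemma one_sub_mul_integral_powDerivSlope (hX : MemLp (fun ω => (X ω : ℝ)) 2 μ) {s : ℝ}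
    (h0 : 0 ≤ s) (h1 : s ≤ 1) :
    (1 - s) * μ[fun ω => powDerivSlope (X ω) s]
      = μ[fun ω => (X ω : ℝ)] - μ[fun ω => (X ω : ℝ) * s ^ (X ω - 1)] := by
  rw [← integral_const_mul]
  simp_rw [one_sub_mul_powDerivSlope]
  exact integral_sub (integrable_natCast hX) (integrable_natCast_mul_pow hX h0 h1)

lemma tendsto_integral_powDerivSlope (hX : MemLp (fun ω => (X ω : ℝ)) 2 μ) :
    Tendsto (fun s => μ[fun ω => powDerivSlope (X ω) s]) (𝓝[<] 1)
      (𝓝 μ[fun ω => (X ω : ℝ) * ((X ω : ℝ) - 1)]) := by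
  refine tendsto_integral_filter_of_dominated_convergence (fun ω => (X ω : ℝ) ^ 2)
    (Eventually.of_forall fun s =>
      aestronglyMeasurable_comp_of_natCast hX.aestronglyMeasurable.aemeasurable
        (powDerivSlope · s))
    (eventually_of_mem (Ioo_mem_nhdsLT one_pos) fun s hs => ae_of_all _ fun ω =>
      abs_powDerivSlope_le_sq (X ω) hs.1.le hs.2.le)
    hX.integrable_sq (ae_of_all _ fun ω => ?_)
  rw [← powDerivSlope_one]
  exact (continuous_powDerivSlope (X ω)).continuousWithinAt.tendsto

lemma variance_natCast_eq [IsProbabilityMeasure μ] (hX : MemLp (fun ω => (X ω : ℝ)) 2 μ) :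
    variance (fun ω => (X ω : ℝ)) μ
      = μ[fun ω => (X ω : ℝ) * ((X ω : ℝ) - 1)] + μ[fun ω => (X ω : ℝ)]
        - μ[fun ω => (X ω : ℝ)] ^ 2 := by
  have hsq : (fun ω => (X ω : ℝ)) ^ 2
      = fun ω => (X ω : ℝ) * ((X ω : ℝ) - 1) + (X ω : ℝ) := by
    ext ω
    simp only [Pi.pow_apply]
    ring
  have hint := integrable_natCast hX
  have hfact : Integrable (fun ω => (X ω : ℝ) * ((X ω : ℝ) - 1)) μ :=
    (hX.integrable_sq.sub hint).congr (ae_of_all _ fun ω => by simp only [Pi.sub_apply]; ring)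
  rw [variance_eq_sub hX, hsq, integral_add hfact hint]

end NatValued

theorem variance_le_of_lengthBiased_pgf_order_general
    {Ω : Type*} [MeasurableSpace Ω] (μ : Measure Ω) [IsProbabilityMeasure μ]
    (η η' : Ω → ℕ)
    (h2 : MemLp (fun ω => (η ω : ℝ)) 2 μ)
    (h2' : MemLp (fun ω => (η' ω : ℝ)) 2 μ)
    (hmean : μ[fun ω => (η ω : ℝ)] = μ[fun ω => (η' ω : ℝ)])
    (hord : ∀ s ∈ Set.Icc (0 : ℝ) 1,
      μ[fun ω => (η' ω : ℝ) * s ^ (η' ω - 1)] ≤ μ[fun ω => (η ω : ℝ) * s ^ (η ω - 1)]) :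
    variance (fun ω => (η ω : ℝ)) μ ≤ variance (fun ω => (η' ω : ℝ)) μ := by
  have hslope : ∀ᶠ s in 𝓝[<] (1 : ℝ),
      μ[fun ω => powDerivSlope (η ω) s] ≤ μ[fun ω => powDerivSlope (η' ω) s] := by
    filter_upwards [Ioo_mem_nhdsLT one_pos] with s ⟨h0, h1⟩
    have hdiff := hord s ⟨h0.le, h1.le⟩
    have h := one_sub_mul_integral_powDerivSlope h2 h0.le h1.le
    have h' := one_sub_mul_integral_powDerivSlope h2' h0.le h1.le
    refine le_of_mul_le_mul_left ?_ (sub_pos.mpr h1)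
    linarith
  have hfact := le_of_tendsto_of_tendsto (tendsto_integral_powDerivSlope h2)
    (tendsto_integral_powDerivSlope h2') hslope
  rw [variance_natCast_eq h2, variance_natCast_eq h2', hmean]
  linarith

/-- If `η` and `η̃` are ℕ-valued random variables with finite second moments, equal
finite positive means, and `η` is smaller than `η̃` in the length-biased probability
generating function ordering, then `Var[η] ≤ Var[η̃]`. -/
theorem variance_le_of_lengthBiased_pgf_order
    {Ω : Type*} [MeasurableSpace Ω] (μ : Measure Ω) [IsProbabilityMeasure μ]
    (η η' : Ω → ℕ) (hη : Measurable η) (hη' : Measurable η')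
    (h2 : MemLp (fun ω => (η ω : ℝ)) 2 μ)
    (h2' : MemLp (fun ω => (η' ω : ℝ)) 2 μ)
    (hmean : μ[fun ω => (η ω : ℝ)] = μ[fun ω => (η' ω : ℝ)])
    (hpos : 0 < μ[fun ω => (η ω : ℝ)])
    (hord : ∀ s ∈ Set.Icc (0 : ℝ) 1,
      μ[fun ω => (η' ω : ℝ) * s ^ (η' ω - 1)] ≤ μ[fun ω => (η ω : ℝ) * s ^ (η ω - 1)]) :
    variance (fun ω => (η ω : ℝ)) μ ≤ variance (fun ω => (η' ω : ℝ)) μ :=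
  variance_le_of_lengthBiased_pgf_order_general μ η η' h2 h2' hmean hord
end

section
/- Let Λ and Λ̃ be nonnegative random variables with finite second moments and equal means E[Λ] = E[Λ̃]. If for every s ∈ [0,1] one has E[Λ·e^{−sΛ}]·E[e^{−sΛ̃}] ≥ E[Λ̃·e^{−sΛ̃}]·E[e^{−sΛ}], then Var[Λ] ≤ Var[Λ̃]. -/
/-!
Put `A(s) = E[Λ e^{-sΛ}]`, `B(s) = E[e^{-sΛ}]`, and `Ã`, `B̃` likewise for `Λ̃`. The hypothesis
says that `D = A B̃ - Ã B` is nonnegative on `[0, 1]`, and `D 0 = E Λ - E Λ̃ = 0`, so the right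
derivative of `D` at `0` is nonnegative. Differentiating under the integral sign, which is
legitimate on the right of `0` because `|e^{-sx} - 1| ≤ s x` for `s, x ≥ 0`, gives
`A'(0) = -E[Λ²]` and `B'(0) = -E Λ`, whence
`D'(0) = E[Λ̃²] - E[Λ²]`, which for equal means is `Var Λ̃ - Var Λ`.
-/

open MeasureTheory ProbabilityTheory Filter Topology Set

lemma abs_exp_neg_mul_sub_one_le {s x : ℝ} (hs : 0 ≤ s) (hx : 0 ≤ x) :
    |Real.exp (-s * x) - 1| ≤ s * x := by
  have hle : Real.exp (-s * x) ≤ 1 := Real.exp_le_one_iff.2 (by nlinarith)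
  have hge : 1 - s * x ≤ Real.exp (-s * x) := by
    simpa [neg_mul] using Real.one_sub_le_exp_neg (s * x)
  rw [abs_of_nonpos (sub_nonpos.2 hle)]
  linarith

theorem IsLocalMinOn.hasDerivWithinAt_Ici_nonneg {f : ℝ → ℝ} {f' a : ℝ}
    (h : IsLocalMinOn f (Ici a) a) (hf : HasDerivWithinAt f f' (Ici a) a) : 0 ≤ f' := by
  have hy : (1 : ℝ) ∈ posTangentConeAt (Ici a) a :=
    mem_posTangentConeAt_of_segment_subset (segment_subset_Icc (by simp)
      |>.trans Icc_subset_Ici_self)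
  simpa using h.hasFDerivWithinAt_nonneg hf.hasFDerivWithinAt hy

section

variable {Ω : Type*} [MeasurableSpace Ω] {μ : Measure Ω} {X Y : Ω → ℝ}

lemma integrable_mul_exp_neg_mul (hY : Integrable Y μ) (hX : AEStronglyMeasurable X μ)
    (hX0 : ∀ᵐ ω ∂μ, 0 ≤ X ω) {s : ℝ} (hs : 0 ≤ s) :
    Integrable (fun ω => Y ω * Real.exp (-s * X ω)) μ := by
  refine hY.mul_bdd (c := 1) (by fun_prop) ?_
  filter_upwards [hX0] with ω hω
  rw [Real.norm_eq_abs, Real.abs_exp, Real.exp_le_one_iff]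
  nlinarith

lemma hasDerivWithinAt_integral_mul_exp_neg_mul (hY : Integrable Y μ)
    (hYX : Integrable (fun ω => Y ω * X ω) μ) (hX : AEStronglyMeasurable X μ)
    (hX0 : ∀ᵐ ω ∂μ, 0 ≤ X ω) :
    HasDerivWithinAt (fun s => ∫ ω, Y ω * Real.exp (-s * X ω) ∂μ)
      (-∫ ω, Y ω * X ω ∂μ) (Ici 0) 0 := by
  rw [hasDerivWithinAt_iff_tendsto_slope, Ici_sdiff_left, ← integral_neg]
  have hslope : ∀ s ∈ Ioi (0 : ℝ), slope (fun s => ∫ ω, Y ω * Real.exp (-s * X ω) ∂μ) 0 s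
      = ∫ ω, s⁻¹ • (Y ω * Real.exp (-(0 + s) * X ω) - Y ω * Real.exp (-0 * X ω)) ∂μ := by
    intro s hs
    rw [slope_def_field, integral_smul, integral_sub
      (integrable_mul_exp_neg_mul hY hX hX0 (by simpa using hs.le))
      (integrable_mul_exp_neg_mul hY hX hX0 le_rfl)]
    simp [div_eq_inv_mul]
  refine tendsto_nhdsWithin_congr (fun s hs => (hslope s hs).symm) ?_
  refine tendsto_integral_filter_of_dominated_convergence (fun ω => ‖Y ω * X ω‖) ?_ ?_
    hYX.norm ?_
  · exact Eventually.of_forall fun s => by fun_prop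
  · filter_upwards [self_mem_nhdsWithin] with s (hs : 0 < s)
    filter_upwards [hX0] with ω hω
    simp only [zero_add, neg_zero, zero_mul, Real.exp_zero, mul_one]
    rw [← mul_sub_one]
    simp only [norm_smul, norm_mul, Real.norm_eq_abs, abs_inv, abs_of_pos hs, abs_of_nonneg hω]
    calc s⁻¹ * (|Y ω| * |Real.exp (-s * X ω) - 1|)
        ≤ s⁻¹ * (|Y ω| * (s * X ω)) := by gcongr; exact abs_exp_neg_mul_sub_one_le hs.le hω
      _ = |Y ω| * X ω := by field_simp
  · refine Eventually.of_forall fun ω => ?_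
    have hd : HasDerivAt (fun s => Y ω * Real.exp (-s * X ω)) (-(Y ω * X ω)) 0 := by
      simpa using (((hasDerivAt_neg 0).mul_const (X ω)).exp.const_mul (Y ω))
    exact hd.tendsto_slope_zero_right

lemma hasDerivWithinAt_integral_exp_neg_mul [IsFiniteMeasure μ] (hX : Integrable X μ)
    (hX0 : ∀ᵐ ω ∂μ, 0 ≤ X ω) :
    HasDerivWithinAt (fun s => ∫ ω, Real.exp (-s * X ω) ∂μ) (-∫ ω, X ω ∂μ) (Ici 0) 0 := by
  simpa using hasDerivWithinAt_integral_mul_exp_neg_mul (Y := 1) (integrable_const 1)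
    (by simpa using hX) hX.aestronglyMeasurable hX0

lemma hasDerivWithinAt_integral_self_mul_exp_neg_mul (hX : Integrable X μ)
    (hX2 : Integrable (fun ω => X ω ^ 2) μ) (hX0 : ∀ᵐ ω ∂μ, 0 ≤ X ω) :
    HasDerivWithinAt (fun s => ∫ ω, X ω * Real.exp (-s * X ω) ∂μ) (-∫ ω, X ω ^ 2 ∂μ)
      (Ici 0) 0 := by
  simpa [sq] using hasDerivWithinAt_integral_mul_exp_neg_mul hX (by simpa [sq] using hX2)
    hX.aestronglyMeasurable hX0

end

theorem variance_le_of_first_cumulant_order_general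
    {Ω : Type*} [MeasurableSpace Ω] (μ : Measure Ω) [IsProbabilityMeasure μ]
    (Λ Λ' : Ω → ℝ)
    (h0 : ∀ ω, 0 ≤ Λ ω) (h0' : ∀ ω, 0 ≤ Λ' ω)
    (h2 : MemLp Λ 2 μ) (h2' : MemLp Λ' 2 μ)
    (hmean : μ[Λ] = μ[Λ'])
    (hord : ∀ s ∈ Set.Icc (0 : ℝ) 1,
      (μ[fun ω => Λ' ω * Real.exp (-s * Λ' ω)]) * (μ[fun ω => Real.exp (-s * Λ ω)]) ≤
      (μ[fun ω => Λ ω * Real.exp (-s * Λ ω)]) * (μ[fun ω => Real.exp (-s * Λ' ω)])) :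
    variance Λ μ ≤ variance Λ' μ := by
  have hA := hasDerivWithinAt_integral_self_mul_exp_neg_mul (h2.integrable one_le_two)
    h2.integrable_sq (ae_of_all _ h0)
  have hA' := hasDerivWithinAt_integral_self_mul_exp_neg_mul (h2'.integrable one_le_two)
    h2'.integrable_sq (ae_of_all _ h0')
  have hB := hasDerivWithinAt_integral_exp_neg_mul (h2.integrable one_le_two) (ae_of_all _ h0)
  have hB' := hasDerivWithinAt_integral_exp_neg_mul (h2'.integrable one_le_two) (ae_of_all _ h0')
  let D : ℝ → ℝ := fun s => μ[fun ω => Λ ω * Real.exp (-s * Λ ω)] *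
    μ[fun ω => Real.exp (-s * Λ' ω)] - μ[fun ω => Λ' ω * Real.exp (-s * Λ' ω)] *
    μ[fun ω => Real.exp (-s * Λ ω)]
  have hD : HasDerivWithinAt D (μ[Λ' ^ 2] - μ[Λ ^ 2]) (Ici 0) 0 :=
    ((hA.mul hB').sub (hA'.mul hB)).congr_deriv (by simp [hmean]; ring)
  have hmin : IsLocalMinOn D (Ici 0) 0 := by
    filter_upwards [Icc_mem_nhdsGE one_pos] with s hs
    simpa [D, hmean] using hord s hs
  have hD_nonneg := hmin.hasDerivWithinAt_Ici_nonneg hD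
  rw [variance_eq_sub h2, variance_eq_sub h2', hmean]
  linarith

/-- If `Λ` and `Λ̃` are nonnegative random variables with finite second moments, equal
means, and for every `s ∈ [0,1]` one has
`E[Λ·e^{−sΛ}]·E[e^{−sΛ̃}] ≥ E[Λ̃·e^{−sΛ̃}]·E[e^{−sΛ}]`, then `Var[Λ] ≤ Var[Λ̃]`. -/
theorem variance_le_of_first_cumulant_order
    {Ω : Type*} [MeasurableSpace Ω] (μ : Measure Ω) [IsProbabilityMeasure μ]
    (Λ Λ' : Ω → ℝ) (hΛ : Measurable Λ) (hΛ' : Measurable Λ')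
    (h0 : ∀ ω, 0 ≤ Λ ω) (h0' : ∀ ω, 0 ≤ Λ' ω)
    (h2 : MemLp Λ 2 μ) (h2' : MemLp Λ' 2 μ)
    (hmean : μ[Λ] = μ[Λ'])
    (hord : ∀ s ∈ Set.Icc (0 : ℝ) 1,
      (μ[fun ω => Λ' ω * Real.exp (-s * Λ' ω)]) * (μ[fun ω => Real.exp (-s * Λ ω)]) ≤
      (μ[fun ω => Λ ω * Real.exp (-s * Λ ω)]) * (μ[fun ω => Real.exp (-s * Λ' ω)])) :
    variance Λ μ ≤ variance Λ' μ :=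
  variance_le_of_first_cumulant_order_general μ Λ Λ' h0 h0' h2 h2' hmean hord
end

section
/- Let η be negative binomial with parameters (p,r) and η̃ negative binomial with parameters (p̃,r̃), where p, p̃ ∈ (0,1) and r, r̃ ≥ 1 are integers. (a) If p = p̃ and r ≤ r̃, then η <_{l-g} η̃, i.e. for every s ∈ [0,1]: (p/(r(1−p)))·Σ_{k≥1} k·s^{k−1}·C(k+r−1,k)·p^r·(1−p)^k ≥ (p/(r̃(1−p)))·Σ_{k≥1} k·s^{k−1}·C(k+r̃−1,k)·p^{r̃}·(1−p)^k. (b) If r = r̃ and p ≥ p̃, then likewise η <_{l-g} η̃. -/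
/-!
Normalised by the mean `r(1-p)/p`, the length-biased pgf of the negative binomial law `(p, r)`
is `(p / (1 - (1 - p) s)) ^ (r + 1)`, the `(r + 1)`-th power of the geometric pgf: it is the
derivative of `(1 - x)⁻ʳ = ∑ C(k+r-1, k) xᵏ` at `x = (1 - p) s`, rescaled. For `s ∈ [0, 1]`
the geometric pgf lies in `(0, 1]` and increases with `p`, so its power decreases in `r` and
increases in `p`.
-/

theorem hasSum_mul_choose_mul_pow_pred_of_norm_lt_one {𝕜 : Type*} [NormedDivisionRing 𝕜]
    [HasSummableGeomSeries 𝕜] (r : ℕ) {x : 𝕜} (hx : ‖x‖ < 1) :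
    HasSum (fun k : ℕ ↦ (k : 𝕜) * (k + r - 1).choose k * x ^ (k - 1))
      (r * (1 / (1 - x) ^ (r + 1))) := by
  have hshift (j : ℕ) : ((j + 1 : ℕ) : 𝕜) * (j + 1 + r - 1).choose (j + 1) * x ^ (j + 1 - 1) =
      r * ((j + r).choose r * x ^ j) := by
    have hchoose : (j + 1) * (j + r).choose (j + 1) = r * (j + r).choose r := by
      rw [mul_comm, Nat.choose_succ_right_eq, Nat.choose_symm_add, Nat.add_sub_cancel_left,
        mul_comm]
    rw [show j + 1 + r - 1 = j + r by omega, Nat.add_sub_cancel, ← mul_assoc]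
    exact_mod_cast congrArg (fun n : ℕ ↦ (n : 𝕜) * x ^ j) hchoose
  rw [← hasSum_nat_add_iff' 1]
  simp only [hshift, Finset.sum_range_one, Nat.cast_zero, zero_mul, sub_zero]
  exact (hasSum_choose_mul_geometric_of_norm_lt_one r hx).mul_left (r : 𝕜)

noncomputable def geometricPGF (p s : ℝ) : ℝ :=
  p / (1 - (1 - p) * s)

theorem geometricPGF_pos {p s : ℝ} (hp0 : 0 < p) (hp1 : p ≤ 1) (hs1 : s ≤ 1) :
    0 < geometricPGF p s :=
  div_pos hp0 (by nlinarith)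

theorem geometricPGF_le_one {p s : ℝ} (hp0 : 0 < p) (hp1 : p ≤ 1) (hs1 : s ≤ 1) :
    geometricPGF p s ≤ 1 := by
  rw [geometricPGF, div_le_one (by nlinarith)]
  nlinarith

theorem geometricPGF_le_geometricPGF {p p' s : ℝ} (hp0' : 0 < p') (hp1 : p ≤ 1) (hpp : p' ≤ p)
    (hs1 : s ≤ 1) : geometricPGF p' s ≤ geometricPGF p s := by
  rw [geometricPGF, geometricPGF, div_le_div_iff₀ (by nlinarith) (by nlinarith)]
  nlinarith [mul_nonneg (sub_nonneg.mpr hpp) (sub_nonneg.mpr hs1)]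

theorem abs_one_sub_mul_lt_one {p s : ℝ} (hp0 : 0 < p) (hp1 : p ≤ 1) (hs0 : 0 ≤ s)
    (hs1 : s ≤ 1) : |(1 - p) * s| < 1 := by
  rw [abs_of_nonneg (mul_nonneg (by linarith) hs0)]
  nlinarith

/-- `E[η]⁻¹ E[η s^(η-1)]` for `η` negative binomial with parameters `(p, r)`. -/
noncomputable def negBinomialLengthBiasedPGF (p : ℝ) (r : ℕ) (s : ℝ) : ℝ :=
  p / (r * (1 - p)) *
    ∑' k : ℕ, (k : ℝ) * s ^ (k - 1) * (((k + r - 1).choose k : ℝ) * p ^ r * (1 - p) ^ k)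

theorem negBinomialLengthBiasedPGF_eq {p s : ℝ} {r : ℕ} (hr : r ≠ 0) (hp : p ≠ 1)
    (hps : |(1 - p) * s| < 1) :
    negBinomialLengthBiasedPGF p r s = geometricPGF p s ^ (r + 1) := by
  have hterm (k : ℕ) :
      (k : ℝ) * s ^ (k - 1) * (((k + r - 1).choose k : ℝ) * p ^ r * (1 - p) ^ k) =
        p ^ r * (1 - p) * ((k : ℝ) * (k + r - 1).choose k * ((1 - p) * s) ^ (k - 1)) := by
    rcases k with _ | k
    · simp
    · simp only [Nat.add_sub_cancel, pow_succ, mul_pow]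
      ring
  have hdenom : 1 - (1 - p) * s ≠ 0 := (sub_pos.mpr ((le_abs_self _).trans_lt hps)).ne'
  have hq : 1 - p ≠ 0 := sub_ne_zero.mpr (Ne.symm hp)
  rw [negBinomialLengthBiasedPGF, geometricPGF, funext hterm, tsum_mul_left,
    (hasSum_mul_choose_mul_pow_pred_of_norm_lt_one r (x := (1 - p) * s) hps).tsum_eq]
  generalize 1 - (1 - p) * s = D at hdenom ⊢
  rw [div_pow, pow_succ]
  field_simp
  ring

theorem negBinomialLengthBiasedPGF_le_of_shape_le {p s : ℝ} {r r' : ℕ} (hp0 : 0 < p)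
    (hp1 : p < 1) (hs0 : 0 ≤ s) (hs1 : s ≤ 1) (hr : 1 ≤ r) (hrr : r ≤ r') :
    negBinomialLengthBiasedPGF p r' s ≤ negBinomialLengthBiasedPGF p r s := by
  have hps := abs_one_sub_mul_lt_one hp0 hp1.le hs0 hs1
  rw [negBinomialLengthBiasedPGF_eq (by omega) hp1.ne hps,
    negBinomialLengthBiasedPGF_eq (by omega) hp1.ne hps]
  exact pow_le_pow_of_le_one (geometricPGF_pos hp0 hp1.le hs1).le
    (geometricPGF_le_one hp0 hp1.le hs1) (by omega)

theorem negBinomialLengthBiasedPGF_le_of_prob_le {p p' s : ℝ} {r : ℕ} (hp0' : 0 < p')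
    (hp1 : p < 1) (hpp : p' ≤ p) (hs0 : 0 ≤ s) (hs1 : s ≤ 1) (hr : r ≠ 0) :
    negBinomialLengthBiasedPGF p' r s ≤ negBinomialLengthBiasedPGF p r s := by
  have hp1' : p' < 1 := hpp.trans_lt hp1
  rw [negBinomialLengthBiasedPGF_eq hr hp1'.ne (abs_one_sub_mul_lt_one hp0' hp1'.le hs0 hs1),
    negBinomialLengthBiasedPGF_eq hr hp1.ne
      (abs_one_sub_mul_lt_one (hp0'.trans_le hpp) hp1.le hs0 hs1)]
  exact pow_le_pow_left₀ (geometricPGF_pos hp0' hp1'.le hs1).le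
    (geometricPGF_le_geometricPGF hp0' hp1.le hpp hs1) _

theorem negBinomial_lengthBiased_pgf_order_general (p p' : ℝ) (r r' : ℕ)
    (hp : p ∈ Set.Ioo (0 : ℝ) 1) (hp' : p' ∈ Set.Ioo (0 : ℝ) 1)
    (hr : 1 ≤ r) :
    ((p = p' ∧ r ≤ r') → ∀ s ∈ Set.Icc (0 : ℝ) 1,
      p' / ((r' : ℝ) * (1 - p')) *
          ∑' k : ℕ, (k : ℝ) * s ^ (k - 1) * (((k + r' - 1).choose k : ℝ) * p' ^ r' * (1 - p') ^ k)
        ≤ p / ((r : ℝ) * (1 - p)) *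
          ∑' k : ℕ, (k : ℝ) * s ^ (k - 1) * (((k + r - 1).choose k : ℝ) * p ^ r * (1 - p) ^ k)) ∧
    ((r = r' ∧ p' ≤ p) → ∀ s ∈ Set.Icc (0 : ℝ) 1,
      p' / ((r' : ℝ) * (1 - p')) *
          ∑' k : ℕ, (k : ℝ) * s ^ (k - 1) * (((k + r' - 1).choose k : ℝ) * p' ^ r' * (1 - p') ^ k)
        ≤ p / ((r : ℝ) * (1 - p)) *
          ∑' k : ℕ, (k : ℝ) * s ^ (k - 1) * (((k + r - 1).choose k : ℝ) * p ^ r * (1 - p) ^ k)) := by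
  constructor
  · rintro ⟨rfl, hrr⟩ s ⟨hs0, hs1⟩
    exact negBinomialLengthBiasedPGF_le_of_shape_le hp.1 hp.2 hs0 hs1 hr hrr
  · rintro ⟨rfl, hpp⟩ s ⟨hs0, hs1⟩
    exact negBinomialLengthBiasedPGF_le_of_prob_le hp'.1 hp.2 hpp hs0 hs1 (by omega)

/-- Length-biased pgf ordering for negative binomial distributions: with `η` negative
binomial(p,r) and `η̃` negative binomial(p̃,r̃), (a) if `p = p̃` and `r ≤ r̃` then
`η <_{l-g} η̃`; (b) if `r = r̃` and `p ≥ p̃` then `η <_{l-g} η̃`. -/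
theorem negBinomial_lengthBiased_pgf_order (p p' : ℝ) (r r' : ℕ)
    (hp : p ∈ Set.Ioo (0 : ℝ) 1) (hp' : p' ∈ Set.Ioo (0 : ℝ) 1)
    (hr : 1 ≤ r) (hr' : 1 ≤ r') :
    ((p = p' ∧ r ≤ r') → ∀ s ∈ Set.Icc (0 : ℝ) 1,
      p' / ((r' : ℝ) * (1 - p')) *
          ∑' k : ℕ, (k : ℝ) * s ^ (k - 1) * (((k + r' - 1).choose k : ℝ) * p' ^ r' * (1 - p') ^ k)
        ≤ p / ((r : ℝ) * (1 - p)) *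
          ∑' k : ℕ, (k : ℝ) * s ^ (k - 1) * (((k + r - 1).choose k : ℝ) * p ^ r * (1 - p) ^ k)) ∧
    ((r = r' ∧ p' ≤ p) → ∀ s ∈ Set.Icc (0 : ℝ) 1,
      p' / ((r' : ℝ) * (1 - p')) *
          ∑' k : ℕ, (k : ℝ) * s ^ (k - 1) * (((k + r' - 1).choose k : ℝ) * p' ^ r' * (1 - p') ^ k)
        ≤ p / ((r : ℝ) * (1 - p)) *
          ∑' k : ℕ, (k : ℝ) * s ^ (k - 1) * (((k + r - 1).choose k : ℝ) * p ^ r * (1 - p) ^ k)) :=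
  negBinomial_lengthBiased_pgf_order_general p p' r r' hp hp' hr
end

section
/- Let α, β, α̃, β̃ > 0. Then the inequality α/(β+s) ≥ α̃/(β̃+s) holds for all s ≥ 0 if and only if α ≥ α̃ and α·β̃ ≥ α̃·β (i.e. α/β ≥ α̃/β̃). Consequently, a Gamma(α,β) random variable Λ and a Gamma(α̃,β̃) random variable Λ̃ satisfy E[Λ·e^{−sΛ}]/E[e^{−sΛ}] ≥ E[Λ̃·e^{−sΛ̃}]/E[e^{−sΛ̃}] for all s ≥ 0 (the first cumulant order Λ <_{cum} Λ̃) if and only if α ≥ α̃ and α/β ≥ α̃/β̃. -/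
/-!
Against a Gamma(a, r) law, `x ^ p * exp (-s * x)` integrates to
`r ^ a * Γ(a + p) / (Γ(a) * (r + s) ^ (a + p))`, so `Γ(a + 1) = a Γ(a)` makes the cumulant ratio
`a / (r + s)` and the second equivalence reduces to the first. Cross-multiplied,
`α' / (β' + s) ≤ α / (β + s)` reads `(α' - α) * s ≤ α * β' - α' * β`, an affine inequality in `s`
that holds on `[0, ∞)` iff it holds at `s = 0` and its slope is nonpositive.
-/

open MeasureTheory ProbabilityTheory Real Set

theorem integral_gammaMeasure {a r : ℝ} (ha : 0 < a) (hr : 0 < r) (g : ℝ → ℝ) :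
    ∫ x, g x ∂gammaMeasure a r =
      ∫ x in Ioi 0, r ^ a / Gamma a * x ^ (a - 1) * exp (-(r * x)) * g x := by
  have hpdf : Measurable (gammaPDF a r) := (measurable_gammaPDFReal a r).ennreal_ofReal
  rw [gammaMeasure, integral_withDensity_eq_integral_toReal_smul hpdf
    (ae_of_all _ fun _ ↦ ENNReal.ofReal_lt_top),
    ← integral_Ici_eq_integral_Ioi, ← setIntegral_eq_integral_of_forall_compl_eq_zero
      fun x hx ↦ by rw [gammaPDF_of_neg (not_le.1 hx), ENNReal.toReal_zero, zero_smul]]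
  refine setIntegral_congr_fun measurableSet_Ici fun x (hx : 0 ≤ x) ↦ ?_
  rw [gammaPDF, ENNReal.toReal_ofReal (gammaPDFReal_nonneg ha hr x), gammaPDFReal, if_pos hx,
    smul_eq_mul]

theorem integral_rpow_mul_exp_neg_mul_gammaMeasure {a r p s : ℝ} (ha : 0 < a) (hr : 0 < r)
    (hp : 0 < a + p) (hs : 0 < r + s) :
    ∫ x, x ^ p * exp (-s * x) ∂gammaMeasure a r =
      r ^ a * Gamma (a + p) / (Gamma a * (r + s) ^ (a + p)) := by
  have integrand : ∀ x ∈ Ioi (0 : ℝ),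
      r ^ a / Gamma a * x ^ (a - 1) * exp (-(r * x)) * (x ^ p * exp (-s * x)) =
        r ^ a / Gamma a * (x ^ (a + p - 1) * exp (-((r + s) * x))) := by
    intro x hx
    rw [show a + p - 1 = a - 1 + p by ring, rpow_add hx,
      show -((r + s) * x) = -(r * x) + -s * x by ring, exp_add]
    ring
  rw [integral_gammaMeasure ha hr, setIntegral_congr_fun measurableSet_Ioi integrand,
    integral_const_mul, integral_rpow_mul_exp_neg_mul_Ioi hp hs, one_div, inv_rpow hs.le]
  field_simp

theorem integral_mul_exp_neg_mul_gammaMeasure_div {a r s : ℝ} (ha : 0 < a) (hr : 0 < r)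
    (hs : 0 < r + s) :
    (∫ x, x * exp (-s * x) ∂gammaMeasure a r) / (∫ x, exp (-s * x) ∂gammaMeasure a r) =
      a / (r + s) := by
  have h₀ := integral_rpow_mul_exp_neg_mul_gammaMeasure ha hr (p := 0) (by simpa) hs
  have h₁ := integral_rpow_mul_exp_neg_mul_gammaMeasure ha hr (p := 1) (by linarith) hs
  simp only [rpow_zero, one_mul, rpow_one, add_zero] at h₀ h₁
  rw [h₀, h₁, Gamma_add_one ha.ne', rpow_add_one hs.ne']
  have hΓ := Gamma_pos_of_pos ha
  have hpow := rpow_pos_of_pos hs a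
  field_simp

theorem forall_nonneg_div_add_le_div_add_iff {a b a' b' : ℝ} (hb : 0 < b) (hb' : 0 < b') :
    (∀ s, 0 ≤ s → a' / (b' + s) ≤ a / (b + s)) ↔ a' ≤ a ∧ a' * b ≤ a * b' := by
  have cross : ∀ s, 0 ≤ s → (a' / (b' + s) ≤ a / (b + s) ↔ (a' - a) * s ≤ a * b' - a' * b) := by
    intro s hs
    rw [div_le_div_iff₀ (by positivity) (by positivity)]
    constructor <;> intro h <;> linarith
  rw [forall₂_congr cross]
  constructor
  · intro h
    refine ⟨?_, by linarith [h 0 le_rfl]⟩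
    by_contra! hlt
    have hslope : 0 < a' - a := sub_pos.2 hlt
    have hbig := h ((|a * b' - a' * b| + 1) / (a' - a)) (div_nonneg (by positivity) hslope.le)
    rw [mul_div_cancel₀ _ hslope.ne'] at hbig
    linarith [le_abs_self (a * b' - a' * b)]
  · rintro ⟨h₁, h₂⟩ s hs
    nlinarith

/-- `α/(β+s) ≥ α̃/(β̃+s)` for all `s ≥ 0` iff `α ≥ α̃` and `α·β̃ ≥ α̃·β`; consequently, a
Gamma(α,β) random variable dominates a Gamma(α̃,β̃) one in the first cumulant order
`<_{cum}` iff `α ≥ α̃` and `α/β ≥ α̃/β̃`. -/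
theorem gamma_first_cumulant_order_iff (α β α' β' : ℝ)
    (hα : 0 < α) (hβ : 0 < β) (hα' : 0 < α') (hβ' : 0 < β') :
    ((∀ s : ℝ, 0 ≤ s → α' / (β' + s) ≤ α / (β + s)) ↔ (α' ≤ α ∧ α' * β ≤ α * β')) ∧
    ((∀ s : ℝ, 0 ≤ s →
        (∫ x, x * Real.exp (-s * x) ∂(gammaMeasure α' β')) /
            (∫ x, Real.exp (-s * x) ∂(gammaMeasure α' β'))
          ≤ (∫ x, x * Real.exp (-s * x) ∂(gammaMeasure α β)) /
            (∫ x, Real.exp (-s * x) ∂(gammaMeasure α β)))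
      ↔ (α' ≤ α ∧ α' * β ≤ α * β')) := by
  refine ⟨forall_nonneg_div_add_le_div_add_iff hβ hβ', ?_⟩
  rw [← forall_nonneg_div_add_le_div_add_iff hβ hβ']
  refine forall₂_congr fun s hs ↦ ?_
  rw [integral_mul_exp_neg_mul_gammaMeasure_div hα hβ (by linarith),
    integral_mul_exp_neg_mul_gammaMeasure_div hα' hβ' (by linarith)]
end
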